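/- arXiv:1703.01470 — 4 statements merged into one kernel-verified Lean document; each statement's English description precedes it below -/
import Mathlib

section
/- If a triple (f,g,h) of functions ℕ → ℕ names a real number ξ, then the triple (K(f,g,h), K(g,f,h), id) also names ξ, where K(f,g,h)(n) = ehelp(f(2n+1), g(2n+1), h(2n+1), n). -/
noncomputable def ehelp (p q r n : ℕ) : ℕ :=
  ⌊(n + 1 : ℝ) * ((p - q : ℕ) : ℝ) / (r + 1) + 1 / 2⌋₊

noncomputable def K (f g h : ℕ → ℕ) : ℕ → ℕ :=
  fun n => ehelp (f (2 * n + 1)) (g (2 * n + 1)) (h (2 * n + 1)) n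

def Names (f g h : ℕ → ℕ) (ξ : ℝ) : Prop :=
  ∀ n : ℕ, |((f n : ℝ) - (g n : ℝ)) / ((h n : ℝ) + 1) - ξ| < 1 / (n + 1)

/-! Since `p ∸ q` and `q ∸ p` are the positive and negative parts of `p - q`, at most one of
`ehelp p q r n` and `ehelp q p r n` is nonzero, and the other rounds `(n + 1) |x|` for
`x = (p - q) / (r + 1)`; so their difference approximates `(n + 1) x` to within `1/2`.
Evaluating the given names at `2n + 1` gives `x` within `1 / (2(n + 1))` of `ξ`, and the
rounding error adds at most another `1 / (2(n + 1))`. -/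

theorem abs_natFloor_add_half_sub_le {y : ℝ} (hy : 0 ≤ y) : |(⌊y + 1 / 2⌋₊ : ℝ) - y| ≤ 1 / 2 := by
  have hlt := Nat.lt_floor_add_one (y + 1 / 2)
  have hle := Nat.floor_le (by linarith : (0 : ℝ) ≤ y + 1 / 2)
  rw [abs_le]
  constructor <;> linarith

theorem ehelp_eq_zero_of_le {p q : ℕ} (hpq : p ≤ q) (r n : ℕ) : ehelp p q r n = 0 := by
  norm_num [ehelp, Nat.sub_eq_zero_of_le hpq]

theorem abs_ehelp_sub_le_of_le {p q : ℕ} (hqp : q ≤ p) (r n : ℕ) :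
    |(ehelp p q r n : ℝ) - (n + 1) * (((p : ℝ) - q) / (r + 1))| ≤ 1 / 2 := by
  have hpq : (0 : ℝ) ≤ (p : ℝ) - q := sub_nonneg.mpr (by exact_mod_cast hqp)
  rw [ehelp, Nat.cast_sub hqp, mul_div_assoc]
  exact abs_natFloor_add_half_sub_le (by positivity)

theorem abs_ehelp_sub_ehelp_sub_le (p q r n : ℕ) :
    |((ehelp p q r n : ℝ) - ehelp q p r n) - (n + 1) * (((p : ℝ) - q) / (r + 1))| ≤ 1 / 2 := by
  rcases le_total q p with hqp | hpq
  · simpa [ehelp_eq_zero_of_le hqp] using abs_ehelp_sub_le_of_le hqp r n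
  · have h := abs_ehelp_sub_le_of_le hpq r n
    rw [← abs_neg] at h
    convert h using 2
    rw [ehelp_eq_zero_of_le hpq]
    ring

theorem abs_ehelp_sub_ehelp_div_sub_le (p q r n : ℕ) :
    |((ehelp p q r n : ℝ) - ehelp q p r n) / (n + 1) - ((p : ℝ) - q) / (r + 1)|
      ≤ 1 / (2 * (n + 1)) := by
  have hn : (0 : ℝ) < n + 1 := by positivity
  rw [div_sub' hn.ne', abs_div, abs_of_pos hn, div_le_div_iff₀ hn (by positivity)]
  nlinarith [abs_ehelp_sub_ehelp_sub_le p q r n]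

theorem stmt_2 (f g h : ℕ → ℕ) (ξ : ℝ) (hname : Names f g h ξ) :
    Names (K f g h) (K g f h) id ξ := by
  intro n
  set m := 2 * n + 1
  have hx := hname m
  rw [show ((m : ℕ) : ℝ) + 1 = 2 * (n + 1) by push_cast [m]; ring] at hx
  have hK := abs_ehelp_sub_ehelp_div_sub_le (f m) (g m) (h m) n
  calc |((K f g h n : ℝ) - K g f h n) / ((id n : ℕ) + 1) - ξ|
      ≤ |((K f g h n : ℝ) - K g f h n) / (n + 1) - ((f m : ℝ) - g m) / (h m + 1)|
        + |((f m : ℝ) - g m) / (h m + 1) - ξ| := abs_sub_le _ _ _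
    _ < 1 / (2 * (n + 1)) + 1 / (2 * (n + 1)) := add_lt_add_of_le_of_lt hK hx
    _ = 1 / (n + 1) := by field_simp; ring
end

section
/- Let ξ be a real number and let 𝔸_ξ be the set of pairs (f,g) of functions ℕ → ℕ such that f(n)·g(n) = 0 for all n and the triple (f, g, id) names ξ. Let E be a continuous operator mapping pairs of functions ℕ → ℕ to functions ℕ → ℕ (continuity: for every pair (f,g) and every x there is z such that E(f',g')(x) = E(f,g)(x) whenever f', g' agree with f, g on all t ≤ z). If for every (f,g) ∈ 𝔸_ξ there exists s with E(f,g)(s) = 0, then there exists T ∈ ℕ such that for all (f,g) ∈ 𝔸_ξ there exists s ≤ T with E(f,g)(s) = 0. -/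
def InA (ξ : ℝ) (f g : ℕ → ℕ) : Prop :=
  (∀ n, f n * g n = 0) ∧ Names f g id ξ

open Filter Topology

/-! The integers at distance less than `1` from `(n + 1) * ξ` are exactly its floor and its
ceiling, and since `f n * g n = 0` the pair `(f n, g n)` is determined by `f n - g n`. Hence
`𝔸_ξ` is the image of Cantor space `ℕ → Bool` under a continuous map choosing floor or ceiling at
each level. Composed with the continuous operator `E`, the open sets `{b | E(f_b, g_b)(s) = 0}`
cover the compact Cantor space, and a finite subcover gives the bound `T`. -/

theorem exists_forall_exists_le_eq_zero_of_compactSpace {X : Type*} [TopologicalSpace X]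
    [CompactSpace X] {F : X → ℕ → ℕ} (hF : Continuous F) (h : ∀ x, ∃ s, F x s = 0) :
    ∃ T, ∀ x, ∃ s ≤ T, F x s = 0 := by
  have hopen (s : ℕ) : IsOpen {x | F x s = 0} :=
    isOpen_discrete {0} |>.preimage ((continuous_apply s).comp hF)
  obtain ⟨I, hI⟩ := isCompact_univ.elim_finite_subcover _ hopen
    fun x _ => Set.mem_iUnion.2 (h x)
  refine ⟨I.sup id, fun x => ?_⟩
  obtain ⟨s, hs, hx⟩ := Set.mem_iUnion₂.1 (hI (Set.mem_univ x))
  exact ⟨s, Finset.le_sup (f := id) hs, hx⟩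

theorem eventually_forall_le_apply_eq {α : Type*} [TopologicalSpace α] [DiscreteTopology α]
    (p : ℕ → α) (z : ℕ) : ∀ᶠ q in 𝓝 p, ∀ t ≤ z, q t = p t :=
  (eventually_all_finite (Set.finite_Iic z)).2 fun t _ =>
    (continuous_apply t).continuousAt.eventually_mem ((isOpen_discrete {p t}).mem_nhds rfl)

theorem continuous_uncurry_of_forall_exists_eq {α β γ : Type*} [TopologicalSpace α]
    [DiscreteTopology α] [TopologicalSpace β] [DiscreteTopology β] [TopologicalSpace γ]
    {E : (ℕ → α) → (ℕ → β) → ℕ → γ}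
    (hE : ∀ f g, ∀ x, ∃ z, ∀ f' g', (∀ t ≤ z, f' t = f t) → (∀ t ≤ z, g' t = g t) →
      E f' g' x = E f g x) :
    Continuous fun p : (ℕ → α) × (ℕ → β) => E p.1 p.2 := by
  refine continuous_pi fun x => IsLocallyConstant.continuous ?_
  refine (IsLocallyConstant.iff_eventually_eq _).2 fun ⟨f, g⟩ => ?_
  obtain ⟨z, hz⟩ := hE f g x
  filter_upwards [(eventually_forall_le_apply_eq f z).prod_nhds (eventually_forall_le_apply_eq g z)]
    with q hq using hz _ _ hq.1 hq.2

theorem abs_intCast_sub_lt_one_iff {R : Type*} [Field R] [LinearOrder R] [IsStrictOrderedRing R]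
    [FloorRing R] (d : ℤ) (x : R) : |(d : R) - x| < 1 ↔ d = ⌊x⌋ ∨ d = ⌈x⌉ := by
  rw [abs_sub_lt_iff]
  constructor
  · rintro ⟨h₁, h₂⟩
    have := Int.le_ceil_iff.2 (by linarith : (d : R) - 1 < x)
    have := Int.floor_le_iff.2 (by linarith : x < d + 1)
    have := Int.ceil_le_floor_add_one x
    omega
  · rintro (rfl | rfl)
    · exact ⟨by linarith [Int.floor_le x], by linarith [Int.lt_floor_add_one x]⟩
    · exact ⟨by linarith [Int.ceil_lt_add_one x], by linarith [Int.le_ceil x]⟩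

theorem names_id_iff {f g : ℕ → ℕ} {ξ : ℝ} :
    Names f g id ξ ↔ ∀ n : ℕ, |(((f n : ℤ) - g n : ℤ) : ℝ) - (n + 1) * ξ| < 1 := by
  refine forall_congr' fun n => ?_
  have hn : (0 : ℝ) < n + 1 := by positivity
  rw [id, ← mul_lt_mul_iff_of_pos_left hn, ← abs_of_pos hn, ← abs_mul, abs_of_pos hn]
  push_cast
  rw [mul_sub, mul_div_cancel₀ _ hn.ne', mul_one_div_cancel hn.ne']

theorem natCast_sub_toNat_of_mul_eq_zero {a b : ℕ} (h : a * b = 0) :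
    ((a : ℤ) - b).toNat = a ∧ (-((a : ℤ) - b)).toNat = b := by
  rcases Nat.mul_eq_zero.1 h with h | h <;> omega

theorem toNat_mul_toNat_neg (d : ℤ) : d.toNat * (-d).toNat = 0 := by
  rcases le_total d 0 with h | h <;> simp [Int.toNat_of_nonpos, h]

section Coding

variable (ξ : ℝ)

noncomputable def approxCode (b : ℕ → Bool) (n : ℕ) : ℤ :=
  if b n then ⌈(n + 1) * ξ⌉ else ⌊(n + 1) * ξ⌋

noncomputable def codePair (b : ℕ → Bool) : (ℕ → ℕ) × (ℕ → ℕ) :=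
  (fun n => (approxCode ξ b n).toNat, fun n => (-approxCode ξ b n).toNat)

theorem continuous_codePair : Continuous (codePair ξ) := by
  have (φ : ℤ → ℕ) : Continuous fun b n => φ (approxCode ξ b n) :=
    continuous_pi fun n => (continuous_of_discreteTopology (f := fun c : Bool =>
      φ (if c then ⌈(n + 1) * ξ⌉ else ⌊(n + 1) * ξ⌋))).comp (continuous_apply n)
  exact (this Int.toNat).prodMk (this fun d => (-d).toNat)

theorem inA_codePair (b : ℕ → Bool) : InA ξ (codePair ξ b).1 (codePair ξ b).2 := by
  refine ⟨fun n => toNat_mul_toNat_neg _, names_id_iff.2 fun n => ?_⟩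
  rw [codePair, Int.toNat_sub_toNat_neg, abs_intCast_sub_lt_one_iff, approxCode]
  split_ifs <;> simp

theorem exists_codePair_eq {f g : ℕ → ℕ} (h : InA ξ f g) : ∃ b, codePair ξ b = (f, g) := by
  obtain ⟨hmul, hnames⟩ := h
  have hcode (n : ℕ) := (abs_intCast_sub_lt_one_iff _ _).1 (names_id_iff.1 hnames n)
  let b (n : ℕ) : Bool := (f n : ℤ) - g n ≠ ⌊(n + 1) * ξ⌋
  have happrox (n : ℕ) : approxCode ξ b n = (f n : ℤ) - g n := by
    by_cases hfloor : (f n : ℤ) - g n = ⌊(n + 1) * ξ⌋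
    · simp [approxCode, b, hfloor]
    · simp [approxCode, b, hfloor, ((hcode n).resolve_left hfloor).symm]
  refine ⟨b, ?_⟩
  simp only [codePair, happrox, (natCast_sub_toNat_of_mul_eq_zero (hmul _)).1,
    (natCast_sub_toNat_of_mul_eq_zero (hmul _)).2]

end Coding

theorem stmt_4 (ξ : ℝ) (E : (ℕ → ℕ) → (ℕ → ℕ) → ℕ → ℕ)
    (hcont : ∀ f g : ℕ → ℕ, ∀ x : ℕ, ∃ z : ℕ, ∀ f' g' : ℕ → ℕ,
      (∀ t ≤ z, f' t = f t) → (∀ t ≤ z, g' t = g t) → E f' g' x = E f g x)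
    (hzero : ∀ f g : ℕ → ℕ, InA ξ f g → ∃ s, E f g s = 0) :
    ∃ T : ℕ, ∀ f g : ℕ → ℕ, InA ξ f g → ∃ s ≤ T, E f g s = 0 := by
  obtain ⟨T, hT⟩ := exists_forall_exists_le_eq_zero_of_compactSpace
    ((continuous_uncurry_of_forall_exists_eq hcont).comp (continuous_codePair ξ))
    fun b => hzero _ _ (inA_codePair ξ b)
  refine ⟨T, fun f g hfg => ?_⟩
  obtain ⟨b, hb⟩ := exists_codePair_eq ξ hfg
  simpa only [Function.comp_apply, hb] using hT b
end

section
/- Suppose (f₁,g₁,h₁) names ξ. Define f(x) = ehelp(p⁰,q⁰,r⁰,x) for x ≤ v and f(x) = ehelp(p,q,r,x) for x > v, and similarly g(x) = ehelp(q⁰,p⁰,r⁰,x) for x ≤ v and g(x) = ehelp(q,p,r,x) for x > v, where |((p⁰-q⁰)/(r⁰+1)) - ξ| < 1/(6v+6), |((p-q)/(r+1)) - ξ| < 1/(6v+6). Then for all x ≤ v, |(f(x)-g(x))/(x+1) - (p-q)/(r+1)| ≤ 5/(6(x+1)). -/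
lemma ehelp_one_sided (a b c x : ℕ) (h : b ≤ a) :
    |((ehelp a b c x : ℝ) - ehelp b a c x) -
      ((x : ℝ) + 1) * (((a : ℝ) - b) / ((c : ℝ) + 1))| ≤ 1 / 2 := by
  have hb : b - a = 0 := Nat.sub_eq_zero_of_le h
  have hab : (0:ℝ) ≤ (a:ℝ) - b := by
    have : (b:ℝ) ≤ a := Nat.cast_le.mpr h; linarith
  set s : ℝ := ((x : ℝ) + 1) * (((a : ℝ) - b) / ((c : ℝ) + 1)) with hs
  have hs0 : 0 ≤ s := by
    apply mul_nonneg (by positivity)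
    exact div_nonneg hab (by positivity)
  have hgz : ehelp b a c x = 0 := by
    simp [ehelp, hb]
    norm_num
  have hfe : ehelp a b c x = ⌊s + 1/2⌋₊ := by
    simp only [ehelp, Nat.cast_sub h, hs]
    ring_nf
  rw [hgz, hfe]
  have h1 : (⌊s + 1/2⌋₊ : ℝ) ≤ s + 1/2 := Nat.floor_le (by linarith)
  have h2 : s + 1/2 < (⌊s + 1/2⌋₊ : ℝ) + 1 := Nat.lt_floor_add_one _
  rw [abs_le]
  constructor <;> push_cast <;> linarith

lemma ehelp_diff (a b c x : ℕ) :
    |((ehelp a b c x : ℝ) - ehelp b a c x) -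
      ((x : ℝ) + 1) * (((a : ℝ) - b) / ((c : ℝ) + 1))| ≤ 1 / 2 := by
  rcases le_total b a with h | h
  · exact ehelp_one_sided a b c x h
  · have := ehelp_one_sided b a c x h
    rw [← abs_neg]
    have heq : -(((ehelp a b c x : ℝ) - ehelp b a c x) -
        ((x : ℝ) + 1) * (((a : ℝ) - b) / ((c : ℝ) + 1))) =
        ((ehelp b a c x : ℝ) - ehelp a b c x) -
        ((x : ℝ) + 1) * (((b : ℝ) - a) / ((c : ℝ) + 1)) := by
      field_simp
      ring
    rw [heq]
    exact this

theorem stmt_13 (f₁ g₁ h₁ : ℕ → ℕ) (ξ : ℝ) (hname : Names f₁ g₁ h₁ ξ)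
    (p0 q0 r0 p q r v : ℕ)
    (h0 : |((p0 : ℝ) - q0) / (r0 + 1) - ξ| < 1 / (6 * v + 6))
    (h1 : |((p : ℝ) - q) / (r + 1) - ξ| < 1 / (6 * v + 6))
    (f g : ℕ → ℕ)
    (hf : ∀ x : ℕ, f x = if x ≤ v then ehelp p0 q0 r0 x else ehelp p q r x)
    (hg : ∀ x : ℕ, g x = if x ≤ v then ehelp q0 p0 r0 x else ehelp q p r x) :
    ∀ x ≤ v, |((f x : ℝ) - (g x : ℝ)) / (x + 1) - ((p : ℝ) - q) / (r + 1)| ≤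
      5 / (6 * (x + 1)) := by
  intro x hx
  rw [hf x, hg x, if_pos hx, if_pos hx]
  have hx1 : (0:ℝ) < (x:ℝ) + 1 := by positivity
  set A : ℝ := ((p0 : ℝ) - q0) / ((r0 : ℝ) + 1) with hA
  set B : ℝ := ((p : ℝ) - q) / ((r : ℝ) + 1) with hB
  set d : ℝ := ((ehelp p0 q0 r0 x : ℝ) - ehelp q0 p0 r0 x) with hd
  have key : |d - ((x:ℝ)+1) * A| ≤ 1/2 := ehelp_diff p0 q0 r0 x
  have step1 : |d / ((x:ℝ)+1) - A| ≤ (1/2) / ((x:ℝ)+1) := by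
    have heq : d / ((x:ℝ)+1) - A = (d - ((x:ℝ)+1) * A) / ((x:ℝ)+1) := by
      field_simp
    rw [heq, abs_div, abs_of_pos hx1]
    gcongr
  have hvx : (1:ℝ) / (6 * v + 6) ≤ 1 / (6 * x + 6) := by
    have : (x:ℝ) ≤ v := Nat.cast_le.mpr hx
    apply one_div_le_one_div_of_le (by positivity)
    linarith
  have hAx : |A - ξ| < 1 / (6 * (x:ℝ) + 6) := lt_of_lt_of_le h0 hvx
  have hBx : |B - ξ| < 1 / (6 * (x:ℝ) + 6) := lt_of_lt_of_le h1 hvx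
  have tri : |d / ((x:ℝ)+1) - B| ≤ |d / ((x:ℝ)+1) - A| + |A - ξ| + |ξ - B| := by
    calc |d / ((x:ℝ)+1) - B| ≤ |d / ((x:ℝ)+1) - A| + |A - B| := abs_sub_le _ _ _
    _ ≤ |d / ((x:ℝ)+1) - A| + (|A - ξ| + |ξ - B|) := by
        have := abs_sub_le A ξ B; linarith
    _ = _ := by ring
  rw [abs_sub_comm ξ B] at tri
  have : |d / ((x:ℝ)+1) - B| ≤ (1/2)/((x:ℝ)+1) + 1/(6*(x:ℝ)+6) + 1/(6*(x:ℝ)+6) := by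
    linarith
  calc |d / ((x:ℝ)+1) - B| ≤ (1/2)/((x:ℝ)+1) + 1/(6*(x:ℝ)+6) + 1/(6*(x:ℝ)+6) := this
  _ = 5 / (6 * ((x:ℝ)+1)) := by field_simp; ring
end

section
/- Every function f : ℕ^m → ℕ obtained from the initial functions (projections, successor, multiplication, truncated subtraction, quotient λxy.⌊x/(y+1)⌋) by substitution and bounded minimization is majorized by a polynomial. -/
/-- Bounded minimization of a unary function up to bound `y`. -/
def bmin (f : ℕ → ℕ) (y : ℕ) : ℕ :=
  if h : ∃ z, z ≤ y ∧ f z = 0 then Nat.find h else y + 1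

/-- The class ℳ²: functions obtained from the initial functions by
substitution and bounded minimization. -/
inductive M2 : ∀ {k : ℕ}, ((Fin k → ℕ) → ℕ) → Prop
  | proj {k : ℕ} (i : Fin k) : M2 (fun v => v i)
  | succ : M2 (fun v : Fin 1 → ℕ => v 0 + 1)
  | mul : M2 (fun v : Fin 2 → ℕ => v 0 * v 1)
  | sub : M2 (fun v : Fin 2 → ℕ => v 0 - v 1)
  | div : M2 (fun v : Fin 2 → ℕ => v 0 / (v 1 + 1))
  | subst {m k : ℕ} (g : (Fin m → ℕ) → ℕ) (h : Fin m → (Fin k → ℕ) → ℕ) :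
      M2 g → (∀ i, M2 (h i)) → M2 (fun v => g (fun i => h i v))
  | bmin {k : ℕ} (f : (Fin (k + 1) → ℕ) → ℕ) : M2 f →
      M2 (fun v : Fin (k + 1) → ℕ =>
        bmin (fun z => f (Fin.snoc (fun i : Fin k => v i.castSucc) z)) (v (Fin.last k)))

lemma eval_mono {σ : Type*} (P : MvPolynomial σ ℕ) {v w : σ → ℕ} (hvw : ∀ i, v i ≤ w i) :
    MvPolynomial.eval v P ≤ MvPolynomial.eval w P := by
  induction P using MvPolynomial.induction_on with
  | C a => simp
  | add p q hp hq => simp only [map_add]; exact Nat.add_le_add hp hq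
  | mul_X p i hp => simp only [map_mul, MvPolynomial.eval_X]; exact Nat.mul_le_mul hp (hvw i)

theorem stmt_16 (k : ℕ) (f : (Fin k → ℕ) → ℕ) (hf : M2 f) :
    ∃ P : MvPolynomial (Fin k) ℕ, ∀ v : Fin k → ℕ, f v ≤ MvPolynomial.eval v P := by
  induction hf with
  | proj i => exact ⟨MvPolynomial.X i, fun v => by simp⟩
  | succ => exact ⟨MvPolynomial.X 0 + 1, fun v => by simp⟩
  | mul => exact ⟨MvPolynomial.X 0 * MvPolynomial.X 1, fun v => by simp⟩
  | sub => exact ⟨MvPolynomial.X 0, fun v => by simp [Nat.sub_le]⟩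
  | div => exact ⟨MvPolynomial.X 0, fun v => by simp [Nat.div_le_self]⟩
  | subst g h _ _ ihg ihh =>
    obtain ⟨Pg, hPg⟩ := ihg
    choose Ph hPh using ihh
    refine ⟨MvPolynomial.bind₁ Ph Pg, fun v => ?_⟩
    calc g (fun i => h i v) ≤ MvPolynomial.eval (fun i => h i v) Pg := hPg _
      _ ≤ MvPolynomial.eval (fun i => MvPolynomial.eval v (Ph i)) Pg :=
          eval_mono Pg (fun i => hPh i v)
      _ = MvPolynomial.eval v (MvPolynomial.bind₁ Ph Pg) :=
          (MvPolynomial.aeval_bind₁ v Ph Pg).symm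
  | bmin f _ _ =>
    refine ⟨MvPolynomial.X (Fin.last _) + 1, fun v => ?_⟩
    simp only [MvPolynomial.eval_add, MvPolynomial.eval_X, map_one]
    unfold bmin
    split
    · next h => exact le_trans (Nat.le_of_lt_succ (Nat.lt_succ_of_le (Nat.find_spec h).1)) (Nat.le_succ _)
    · exact le_refl _
end
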